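/- For an integer sequence n = (n_1, ..., n_k) and an additional integer n_{k+1}: s^{(n, n_{k+1}, \overleftarrow{n})}_{2k+2}(t) = s^n_{k+1}(t) * T^{(n, n_{k+1})}_{k+1}(t), where \overleftarrow{n} = (n_k, ..., n_1) is the reversed sequence and T^m_j(t) := s^m_{j+1}(t) - s^m_{j-1}(t). -/
import Mathlib


/-- n-Chebyshev polynomials: s 0 = 0, s 1 = 1, s_{k+2}(t) = n_{k+1} t s_{k+1}(t) - s_k(t)
(0-indexed sequence: the 1-indexed entry n_i is `n (i-1)`). -/
def sChe (n : ℕ → ℤ) : ℕ → ℂ → ℂ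
  | 0, _ => 0
  | 1, _ => 1
  | k + 2, t => (n k : ℂ) * t * sChe n (k + 1) t - sChe n k t

theorem sChe_congr (t : ℂ) :
    ∀ (j : ℕ) (m m' : ℕ → ℤ), (∀ i, i + 2 ≤ j → m i = m' i) →
      sChe m j t = sChe m' j t
  | 0, _, _, _ => rfl
  | 1, _, _, _ => rfl
  | j + 2, m, m', h => by
    have h1 := sChe_congr t (j + 1) m m' fun i hi => h i (by omega)
    have h2 := sChe_congr t j m m' fun i hi => h i (by omega)
    show (m j : ℂ) * t * sChe m (j + 1) t - sChe m j t
        = (m' j : ℂ) * t * sChe m' (j + 1) t - sChe m' j t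
    rw [h j (by omega), h1, h2]

theorem sChe_split (t : ℂ) (m : ℕ → ℤ) (i : ℕ) :
    ∀ j, sChe m (i + j + 1) t =
      sChe m (i + 1) t * sChe (fun r => m (i + r)) (j + 1) t -
        sChe m i t * sChe (fun r => m (i + 1 + r)) j t
  | 0 => by
    show sChe m (i + 1) t = sChe m (i + 1) t * 1 - sChe m i t * 0
    ring
  | 1 => by
    show (m i : ℂ) * t * sChe m (i + 1) t - sChe m i t
        = sChe m (i + 1) t * ((m (i + 0) : ℂ) * t * 1 - 0) - sChe m i t * 1
    rw [show i + 0 = i from rfl]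
    ring
  | j + 2 => by
    have H1 : sChe m (i + j + 2) t =
        sChe m (i + 1) t * sChe (fun r => m (i + r)) (j + 2) t -
          sChe m i t * sChe (fun r => m (i + 1 + r)) (j + 1) t := sChe_split t m i (j + 1)
    have H2 : sChe m (i + j + 1) t =
        sChe m (i + 1) t * sChe (fun r => m (i + r)) (j + 1) t -
          sChe m i t * sChe (fun r => m (i + 1 + r)) j t := sChe_split t m i j
    show (m (i + j + 1) : ℂ) * t * sChe m (i + j + 2) t - sChe m (i + j + 1) t
        = sChe m (i + 1) t *
            ((m (i + j + 1) : ℂ) * t * sChe (fun r => m (i + r)) (j + 2) t -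
              sChe (fun r => m (i + r)) (j + 1) t) -
          sChe m i t *
            ((m (i + 1 + j) : ℂ) * t * sChe (fun r => m (i + 1 + r)) (j + 1) t -
              sChe (fun r => m (i + 1 + r)) j t)
    rw [show i + 1 + j = i + j + 1 from by omega, H1, H2]
    ring

theorem sChe_rev (t : ℂ) :
    ∀ (L : ℕ) (m : ℕ → ℤ), sChe (fun i => m (L - 1 - i)) (L + 1) t = sChe m (L + 1) t
  | 0, m => rfl
  | 1, m => by
    show (m (1 - 1 - 0) : ℂ) * t * 1 - 0 = (m 0 : ℂ) * t * 1 - 0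
    norm_num
  | L + 2, m => by
    have hsplit := sChe_split t (fun i => m (L + 1 - i)) 1 (L + 1)
    rw [show 1 + (L + 1) + 1 = L + 3 from by omega] at hsplit
    have h1 : sChe (fun r => m (L + 1 - (1 + r))) (L + 2) t = sChe m (L + 2) t := by
      have := sChe_rev t (L + 1) m
      rw [← this]
      exact sChe_congr t (L + 2) _ _ (fun i hi => congrArg m (by omega))
    have h2 : sChe (fun r => m (L + 1 - (1 + 1 + r))) (L + 1) t = sChe m (L + 1) t := by
      have := sChe_rev t L m
      rw [← this]
      exact sChe_congr t (L + 1) _ _ (fun i hi => congrArg m (by omega))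
    have hs2 : sChe (fun i => m (L + 1 - i)) 2 t = (m (L + 1) : ℂ) * t * 1 - 0 := rfl
    have hgoal : sChe (fun i => m (L + 1 - i)) (L + 3) t
        = sChe m (L + 2) t * ((m (L + 1) : ℂ) * t * 1 - 0) - sChe m (L + 1) t * 1 := by
      rw [hsplit, hs2]
      have e1 : (fun r => (fun i => m (L + 1 - i)) (1 + r)) = fun r => m (L + 1 - (1 + r)) := rfl
      have e2 : (fun r => (fun i => m (L + 1 - i)) (1 + 1 + r)) = fun r => m (L + 1 - (1 + 1 + r)) := rfl
      rw [e1, e2, h1, h2, show sChe (fun i => m (L + 1 - i)) 1 t = 1 from rfl]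
      ring
    show sChe (fun i => m (L + 1 - i)) (L + 3) t
        = (m (L + 1) : ℂ) * t * sChe m (L + 2) t - sChe m (L + 1) t
    rw [hgoal]; ring

theorem sChe_palindrome_T (n : ℕ → ℤ) (k : ℕ) (a : ℤ) (t : ℂ) :
    sChe (fun i => if i < k then n i else if i = k then a else n (2 * k - i))
        (2 * k + 2) t =
      sChe n (k + 1) t *
        (sChe (fun i => if i < k then n i else a) (k + 2) t -
          sChe (fun i => if i < k then n i else a) k t) := by
  set F : ℕ → ℤ := fun i => if i < k then n i else if i = k then a else n (2 * k - i) with hF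
  set V : ℕ → ℤ := fun i => if i < k then n i else a with hV
  have hsplit : sChe F (2 * k + 2) t =
      sChe F (k + 1) t * sChe (fun r => F (k + r)) (k + 2) t -
        sChe F k t * sChe (fun r => F (k + 1 + r)) (k + 1) t := by
    have h0 := sChe_split t F k (k + 1)
    rw [show k + (k + 1) + 1 = 2 * k + 2 from by omega] at h0
    exact h0
  have hC : sChe F (k + 1) t = sChe n (k + 1) t :=
    sChe_congr t (k + 1) _ _ (fun i hi => by
      simp only [hF, if_pos (show i < k from by omega)])
  have hD : sChe F k t = sChe V k t :=
    sChe_congr t k _ _ (fun i hi => by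
      simp only [hF, hV, if_pos (show i < k from by omega)])
  have hA : sChe (fun r => F (k + r)) (k + 2) t = sChe V (k + 2) t := by
    have hrev : sChe (fun i => V (k - i)) (k + 2) t = sChe V (k + 2) t :=
      sChe_rev t (k + 1) V
    rw [← hrev]
    refine sChe_congr t (k + 2) _ _ (fun i hi => ?_)
    simp only [hF, hV]
    by_cases h0 : i = 0
    · subst h0
      simp
    · have h1 : ¬ (k + i < k) := by omega
      have h2 : ¬ (k + i = k) := by omega
      have h3 : k - i < k := by omega
      rw [if_neg h1, if_neg h2, if_pos h3]
      exact congrArg n (by omega)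
  have hB : sChe (fun r => F (k + 1 + r)) (k + 1) t = sChe n (k + 1) t := by
    have hrev : sChe (fun i => n (k - 1 - i)) (k + 1) t = sChe n (k + 1) t :=
      sChe_rev t k n
    rw [← hrev]
    refine sChe_congr t (k + 1) _ _ (fun i hi => ?_)
    simp only [hF]
    have h1 : ¬ (k + 1 + i < k) := by omega
    have h2 : ¬ (k + 1 + i = k) := by omega
    rw [if_neg h1, if_neg h2]
    exact congrArg n (by omega)
  rw [hsplit, hA, hB, hC, hD]
  ring
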